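/- Decomposition of the Bayer–Macrì vector on a wall (Lemma 4.4): fix a frame (H,γ,u), let ch, ch' be as in the frame with xc₁ − ry₁ ≠ 0, and suppose (s,t) with t > 0 lies on the wall (s − C)² + t² = D + C² and Im Z_{ω,β}(ch) > 0, where ω = tH, β = sH + uγ. Then w_{ω,β}(ch) = Im Z_{ω,β}(ch) · [ ((g/2)D + (d/2)u²)·(0, 0, −1) + 𝐭 ], where 𝐭 := (1, C·H + u·γ − (3/4)K, −(3/4)B(K, C·H + u·γ) − (1/2)χ + (11/32)B(K,K)) ∈ ℝ × V × ℝ. -/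

import Mathlib

noncomputable section

variable {V : Type*} [AddCommGroup V] [Module ℝ V]

/-- The Mukai pairing on `ℝ × V × ℝ`. -/
def mukaiPair (B : V →ₗ[ℝ] V →ₗ[ℝ] ℝ) (K : V) (w v : ℝ × V × ℝ) : ℝ :=
  B w.2.1 v.2.1 - w.1 * (v.2.2 - (1/2) * B v.2.1 K)
    - v.1 * (w.2.2 + (1/2) * B w.2.1 K) - (1/8) * w.1 * v.1 * B K K

/-- The Mukai vector of a Chern character. -/
def mukaiVec (B : V →ₗ[ℝ] V →ₗ[ℝ] ℝ) (K : V) (χ : ℝ) (ch : ℝ × V × ℝ) : ℝ × V × ℝ :=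
  (ch.1, ch.2.1 - ((1/4 : ℝ) * ch.1) • K,
    ch.2.2 - (1/4) * B ch.2.1 K + (1/2) * ch.1 * (χ - (1/16) * B K K))

/-- Real part of the central charge `Z_{ω,β}(ch)`. -/
def ZRe (B : V →ₗ[ℝ] V →ₗ[ℝ] ℝ) (ω β : V) (ch : ℝ × V × ℝ) : ℝ :=
  -ch.2.2 + B ch.2.1 β - (ch.1 / 2) * (B β β - B ω ω)

/-- Imaginary part of the central charge `Z_{ω,β}(ch)`. -/
def ZIm (B : V →ₗ[ℝ] V →ₗ[ℝ] ℝ) (ω β : V) (ch : ℝ × V × ℝ) : ℝ :=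
  B ch.2.1 ω - ch.1 * B β ω

/-- Real part of the vector `℧_{Z_{ω,β}}`. -/
def mhoRe (B : V →ₗ[ℝ] V →ₗ[ℝ] ℝ) (K : V) (χ : ℝ) (ω β : V) : ℝ × V × ℝ :=
  (1, β - (3/4 : ℝ) • K,
    -(1/2) * B ω ω + (1/2) * B (β - (3/4 : ℝ) • K) (β - (3/4 : ℝ) • K)
      - (1/2) * (χ - (1/8) * B K K))

/-- Imaginary part of the vector `℧_{Z_{ω,β}}`. -/
def mhoIm (B : V →ₗ[ℝ] V →ₗ[ℝ] ℝ) (K : V) (ω β : V) : ℝ × V × ℝ :=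
  (0, ω, B (β - (3/4 : ℝ) • K) ω)

/-- The Bayer–Macrì vector `w_{ω,β}(ch)`. -/
def wBM (B : V →ₗ[ℝ] V →ₗ[ℝ] ℝ) (K : V) (χ : ℝ) (ω β : V) (ch : ℝ × V × ℝ) :
    ℝ × V × ℝ :=
  ZIm B ω β ch • mhoRe B K χ ω β - ZRe B ω β ch • mhoIm B K ω β

/-!
The numbers `C` and `D` satisfy `g y₁ C + (x g / 2) D = z + u d y₂ - (x / 2) u² d`, and with it
the wall equation `(s - C)² + t² = D + C²` becomes `t · Re Z(ch) = (s - C) · Im Z(ch)`.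
As `℧^im` is linear in `ω = t H`, this gives `w = Im Z(ch) · (℧^re(t H, β) - (s - C) · ℧^im(H, β))`.
Moving `β` along `H` by `s - C` turns the bracket into `℧^re(t H, C H + u γ)` with
`-(s - C)² g / 2` added to the last coordinate, which on the wall, where
`t² + (s - C)² = D + C²`, no longer depends on `(s, t)`.
-/

section

variable {B : V →ₗ[ℝ] V →ₗ[ℝ] ℝ} {K : V} {χ : ℝ}

theorem mhoIm_smul_left (t : ℝ) (ω β : V) : mhoIm B K (t • ω) β = t • mhoIm B K ω β := by
  simp [mhoIm]

theorem wBM_smul_left_eq_of_mul_ZRe_eq {t c : ℝ} {ω β : V} {ch : ℝ × V × ℝ}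
    (h : t * ZRe B (t • ω) β ch = c * ZIm B (t • ω) β ch) :
    wBM B K χ (t • ω) β ch
      = ZIm B (t • ω) β ch • (mhoRe B K χ (t • ω) β - c • mhoIm B K ω β) := by
  rw [wBM, mhoIm_smul_left, smul_smul, mul_comm, h, smul_sub, smul_smul, mul_comm]

theorem mhoRe_sub_smul_mhoIm (hB : ∀ v w : V, B v w = B w v) (c : ℝ) (ω β H : V) :
    mhoRe B K χ ω β - c • mhoIm B K H β
      = mhoRe B K χ ω (β - c • H) - (0, 0, c ^ 2 / 2 * B H H) := by
  ext
  · simp [mhoRe, mhoIm]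
  · simp [mhoRe, mhoIm, sub_right_comm]
  · simp only [mhoRe, mhoIm, Prod.smul_mk, Prod.snd_sub, smul_eq_mul,
      sub_right_comm β (c • H), map_sub, map_smul, LinearMap.sub_apply, LinearMap.smul_apply,
      hB β K, hB H β, hB H K]
    ring

theorem mhoRe_eq_of_symm (hB : ∀ v w : V, B v w = B w v) (ω β : V) :
    mhoRe B K χ ω β = (1, β - (3/4 : ℝ) • K,
      -(1/2) * B ω ω + (1/2) * B β β - (3/4) * B K β - (1/2) * χ + (11/32) * B K K) := by
  simp only [mhoRe, Prod.mk.injEq, map_sub, map_smul, LinearMap.sub_apply, LinearMap.smul_apply,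
    smul_eq_mul, hB β K, true_and]
  ring

variable {H γ δ : V}

theorem ZIm_frame (hγH : B γ H = 0) (hδH : B δ H = 0) (t s u x y₁ y₂ z : ℝ) :
    ZIm B (t • H) (s • H + u • γ) (x, y₁ • H + y₂ • γ + δ, z) = t * B H H * (y₁ - x * s) := by
  simp only [ZIm, map_add, map_smul, LinearMap.add_apply, LinearMap.smul_apply, smul_eq_mul,
    hγH, hδH]
  ring

theorem ZRe_frame (hHγ : B H γ = 0) (hγH : B γ H = 0) (hδH : B δ H = 0) (hδγ : B δ γ = 0)
    (t s u x y₁ y₂ z : ℝ) :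
    ZRe B (t • H) (s • H + u • γ) (x, y₁ • H + y₂ • γ + δ, z)
      = -z + s * y₁ * B H H + u * y₂ * B γ γ
        - x / 2 * ((s ^ 2 - t ^ 2) * B H H + u ^ 2 * B γ γ) := by
  simp only [ZRe, map_add, map_smul, LinearMap.add_apply, LinearMap.smul_apply, smul_eq_mul,
    hHγ, hγH, hδH, hδγ]
  ring

end

theorem wall_center_relation {g d u x y₁ y₂ z r c₁ c₂ χ' C D : ℝ} (hg : g ≠ 0)
    (hden : x * c₁ - r * y₁ ≠ 0)
    (hC : C = (x * χ' - r * z + u * d * (x * c₂ - r * y₂)) / (g * (x * c₁ - r * y₁)))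
    (hD : D = (2*z*c₁ - 2*c₂*u*d*y₁ - x*u^2*d*c₁ + 2*y₂*u*d*c₁ - 2*χ'*y₁ + r*u^2*d*y₁)
              / (g * (x * c₁ - r * y₁))) :
    g * y₁ * C + x * g / 2 * D = z + u * d * y₂ - x / 2 * u ^ 2 * d := by
  have hgden : g * (x * c₁ - r * y₁) ≠ 0 := mul_ne_zero hg hden
  rw [eq_div_iff hgden] at hC hD
  apply mul_right_cancel₀ hgden
  linear_combination g * y₁ * hC + x * g / 2 * hD

theorem wall_wBM_decomposition_general
    (B : V →ₗ[ℝ] V →ₗ[ℝ] ℝ) (hB : ∀ v w : V, B v w = B w v)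
    (K : V) (χ : ℝ)
    (H γ : V) (u g d : ℝ)
    (hg : g = B H H) (hgpos : 0 < g) (hHγ : B H γ = 0)
    (hd : d = -(B γ γ))
    (x y₁ y₂ z r c₁ c₂ χ' : ℝ) (δ : V)
    (hδH : B δ H = 0) (hδγ : B δ γ = 0)
    (hden : x * c₁ - r * y₁ ≠ 0)
    (C D : ℝ)
    (hC : C = (x * χ' - r * z + u * d * (x * c₂ - r * y₂)) / (g * (x * c₁ - r * y₁)))
    (hD : D = (2*z*c₁ - 2*c₂*u*d*y₁ - x*u^2*d*c₁ + 2*y₂*u*d*c₁ - 2*χ'*y₁ + r*u^2*d*y₁)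
              / (g * (x * c₁ - r * y₁)))
    (s t : ℝ)
    (hwall : (s - C)^2 + t^2 = D + C^2) :
    wBM B K χ (t • H) (s • H + u • γ) (x, y₁ • H + y₂ • γ + δ, z)
      = ZIm B (t • H) (s • H + u • γ) (x, y₁ • H + y₂ • γ + δ, z) •
          (((g/2) * D + (d/2) * u^2) • ((0 : ℝ), (0 : V), (-1 : ℝ))
            + ((1 : ℝ), C • H + u • γ - (3/4 : ℝ) • K,
                -(3/4) * B K (C • H + u • γ) - (1/2) * χ + (11/32) * B K K)) := by
  have hγH : B γ H = 0 := hB γ H ▸ hHγ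
  have hcenter := wall_center_relation hgpos.ne' hden hC hD
  subst hg hd
  have hslope : t * ZRe B (t • H) (s • H + u • γ) (x, y₁ • H + y₂ • γ + δ, z)
      = (s - C) * ZIm B (t • H) (s • H + u • γ) (x, y₁ • H + y₂ • γ + δ, z) := by
    rw [ZRe_frame hHγ hγH hδH hδγ, ZIm_frame hγH hδH]
    linear_combination t * hcenter + x * B H H * t / 2 * hwall
  rw [wBM_smul_left_eq_of_mul_ZRe_eq hslope, mhoRe_sub_smul_mhoIm hB,
    show s • H + u • γ - (s - C) • H = C • H + u • γ by module, mhoRe_eq_of_symm hB]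
  congr 1
  ext
  · simp
  · simp
  · simp only [Prod.snd_sub, Prod.snd_add, Prod.smul_mk, smul_eq_mul, map_add, map_smul,
      LinearMap.add_apply, LinearMap.smul_apply, hHγ, hγH]
    linear_combination -(B H H) / 2 * hwall

/-- decomposition of the Bayer–Macrì vector on a wall (Lemma 4.4). -/
theorem wall_wBM_decomposition
    (B : V →ₗ[ℝ] V →ₗ[ℝ] ℝ) (hB : ∀ v w : V, B v w = B w v)
    (K : V) (χ : ℝ)
    (H γ : V) (u g d : ℝ)
    (hg : g = B H H) (hgpos : 0 < g) (hHγ : B H γ = 0)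
    (hd : d = -(B γ γ)) (hdnn : 0 ≤ d) (hu : 0 ≤ u)
    (x y₁ y₂ z r c₁ c₂ χ' : ℝ) (δ δ' : V)
    (hδH : B δ H = 0) (hδγ : B δ γ = 0) (hδ'H : B δ' H = 0) (hδ'γ : B δ' γ = 0)
    (hden : x * c₁ - r * y₁ ≠ 0)
    (C D : ℝ)
    (hC : C = (x * χ' - r * z + u * d * (x * c₂ - r * y₂)) / (g * (x * c₁ - r * y₁)))
    (hD : D = (2*z*c₁ - 2*c₂*u*d*y₁ - x*u^2*d*c₁ + 2*y₂*u*d*c₁ - 2*χ'*y₁ + r*u^2*d*y₁)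
              / (g * (x * c₁ - r * y₁)))
    (s t : ℝ) (ht : 0 < t)
    (hwall : (s - C)^2 + t^2 = D + C^2)
    (hIm : 0 < ZIm B (t • H) (s • H + u • γ) (x, y₁ • H + y₂ • γ + δ, z)) :
    wBM B K χ (t • H) (s • H + u • γ) (x, y₁ • H + y₂ • γ + δ, z)
      = ZIm B (t • H) (s • H + u • γ) (x, y₁ • H + y₂ • γ + δ, z) •
          (((g/2) * D + (d/2) * u^2) • ((0 : ℝ), (0 : V), (-1 : ℝ))
            + ((1 : ℝ), C • H + u • γ - (3/4 : ℝ) • K,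
                -(3/4) * B K (C • H + u • γ) - (1/2) * χ + (11/32) * B K K)) :=
  wall_wBM_decomposition_general B hB K χ H γ u g d hg hgpos hHγ hd x y₁ y₂ z r c₁ c₂ χ' δ hδH hδγ
    hden C D hC hD s t hwall
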